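/- The strong subgraph A* of a vote graph, consisting of all arcs that are unsaturated in some maximum circulation, is acyclic. -/

import Mathlib

open Finset

/-- `x` is a circulation on the arc set `A` with capacities `q`. -/
def IsCirculation {V : Type*} [Fintype V] [DecidableEq V]
    (A : Finset (V × V)) (q x : V × V → ℝ) : Prop :=
  (∀ a ∈ A, 0 ≤ x a ∧ x a ≤ q a) ∧ (∀ a, a ∉ A → x a = 0) ∧
  ∀ i : V, ∑ a ∈ A.filter (fun a => a.1 = i), x a
         = ∑ a ∈ A.filter (fun a => a.2 = i), x a

/-- `x` is a maximum circulation: it maximizes total flow. -/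
def IsMaxCirculation {V : Type*} [Fintype V] [DecidableEq V]
    (A : Finset (V × V)) (q x : V × V → ℝ) : Prop :=
  IsCirculation A q x ∧
  ∀ y, IsCirculation A q y → ∑ a ∈ A, y a ≤ ∑ a ∈ A, x a

/-- The residual (remaining-votes) relation: arcs of `A` not saturated by `x`. -/
def residRel {V : Type*} [Fintype V] [DecidableEq V]
    (A : Finset (V × V)) (q x : V × V → ℝ) (i j : V) : Prop :=
  (i, j) ∈ A ∧ x (i, j) < q (i, j)

/-- A relation is acyclic if it has no directed cycle. -/
def Acyclic {V : Type*} (r : V → V → Prop) : Prop :=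
  ∀ i, ¬ Relation.TransGen r i i

/-- The set of arcs of `A` left unsaturated by `x`. -/
noncomputable def unsat {V : Type*} [Fintype V] [DecidableEq V]
    (A : Finset (V × V)) (q x : V × V → ℝ) : Finset (V × V) :=
  A.filter (fun a => x a < q a)

/-- An arc is strong if some maximum circulation leaves it unsaturated. -/
def IsStrongArc {V : Type*} [Fintype V] [DecidableEq V]
    (A : Finset (V × V)) (q : V × V → ℝ) (a : V × V) : Prop :=
  a ∈ A ∧ ∃ x, IsMaxCirculation A q x ∧ x a < q a

/-- A strong maximum circulation: a maximum circulation leaving as many arcs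
unsaturated as possible. -/
def IsStrongMaxCirculation {V : Type*} [Fintype V] [DecidableEq V]
    (A : Finset (V × V)) (q x : V × V → ℝ) : Prop :=
  IsMaxCirculation A q x ∧
  ∀ y, IsMaxCirculation A q y → (unsat A q y).card ≤ (unsat A q x).card

/-- Strong complementary slackness between a circulation `x` and node
potentials `y`. -/
def StrongCS {V : Type*} [Fintype V] [DecidableEq V]
    (A : Finset (V × V)) (q x : V × V → ℝ) (y : V → ℝ) : Prop :=
  ∀ a ∈ A,
    (x a = 0 → 1 - y a.1 + y a.2 ≤ 0) ∧
    (0 < x a → x a < q a → 1 - y a.1 + y a.2 = 0) ∧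
    (x a = q a → 0 < 1 - y a.1 + y a.2)

/-- The vote graph is Eulerian: capacity balance holds at every node. -/
def Eulerian {V : Type*} [Fintype V] [DecidableEq V]
    (A : Finset (V × V)) (q : V × V → ℝ) : Prop :=
  ∀ i : V, ∑ a ∈ A.filter (fun a => a.1 = i), q a
         = ∑ a ∈ A.filter (fun a => a.2 = i), q a


/-!
If `x` is a maximum circulation, no nonzero nonnegative circulation `m` can be carried by the
arcs that `x` leaves unsaturated, for `x + ε m` would be a circulation with more flow when `ε > 0`
is small. The maximum circulations form a convex set, so averaging them gives a single maximum
circulation leaving every strong arc unsaturated; a directed cycle of strong arcs would carry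
such an `m`.
-/

open Filter Topology

section Flows

variable {V : Type*} [DecidableEq V]

def outflow (A : Finset (V × V)) (f : V × V → ℝ) (k : V) : ℝ :=
  ∑ a ∈ A.filter (fun a => a.1 = k), f a

def inflow (A : Finset (V × V)) (f : V × V → ℝ) (k : V) : ℝ :=
  ∑ a ∈ A.filter (fun a => a.2 = k), f a

theorem outflow_add_single (A : Finset (V × V)) (f : V × V → ℝ) {e : V × V} (he : e ∈ A)
    (k : V) : outflow A (f + Pi.single e 1) k = outflow A f k + if e.1 = k then 1 else 0 := by
  simp [outflow, sum_add_distrib, Finset.sum_pi_single', he]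

theorem inflow_add_single (A : Finset (V × V)) (f : V × V → ℝ) {e : V × V} (he : e ∈ A)
    (k : V) : inflow A (f + Pi.single e 1) k = inflow A f k + if e.2 = k then 1 else 0 := by
  simp [inflow, sum_add_distrib, Finset.sum_pi_single', he]

theorem exists_flow_of_transGen (A : Finset (V × V)) {r : V → V → Prop}
    (hr : ∀ i j, r i j → (i, j) ∈ A) {i j : V} (h : Relation.TransGen r i j) :
    ∃ f : V × V → ℝ, (∀ a, 0 ≤ f a) ∧ (∀ a, f a ≠ 0 → r a.1 a.2) ∧ (∃ a, 0 < f a) ∧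
      ∀ k, outflow A f k + (if j = k then 1 else 0) = inflow A f k + if i = k then 1 else 0 := by
  induction h with
  | @single c hic =>
    refine ⟨0 + Pi.single (i, c) 1, fun a => ?_, fun a ha => ?_, ⟨(i, c), by simp⟩, fun k => ?_⟩
    · simpa using (Pi.single_nonneg.2 zero_le_one : (0 : V × V → ℝ) ≤ Pi.single (i, c) 1) a
    · obtain rfl : a = (i, c) := by by_contra hne; simp [hne] at ha
      exact hic
    · rw [outflow_add_single A 0 (hr _ _ hic), inflow_add_single A 0 (hr _ _ hic)]
      simp [outflow, inflow, add_comm]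
  | @tail b c _ hbc ih =>
    obtain ⟨f, hf_nonneg, hf_supp, -, hf_bal⟩ := ih
    refine ⟨f + Pi.single (b, c) 1, fun a => ?_, fun a ha => ?_, ⟨(b, c), ?_⟩, fun k => ?_⟩
    · exact add_nonneg (hf_nonneg a)
        ((Pi.single_nonneg.2 zero_le_one : (0 : V × V → ℝ) ≤ Pi.single (b, c) 1) a)
    · by_cases hab : a = (b, c)
      · subst hab; exact hbc
      · exact hf_supp a (by simpa [hab] using ha)
    · simpa using add_pos_of_nonneg_of_pos (hf_nonneg (b, c)) one_pos
    · rw [outflow_add_single A f (hr _ _ hbc), inflow_add_single A f (hr _ _ hbc)]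
      linarith [hf_bal k]

end Flows

theorem exists_pos_forall_mul_le {ι : Type*} (s : Finset ι) (u v : ι → ℝ)
    (hv : ∀ i ∈ s, 0 ≤ v i) (huv : ∀ i ∈ s, 0 < u i → 0 < v i) :
    ∃ ε > 0, ∀ i ∈ s, ε * u i ≤ v i := by
  have h : ∀ i ∈ s, ∀ᶠ ε in 𝓝[>] (0 : ℝ), ε * u i ≤ v i := by
    intro i hi
    rcases le_or_gt (u i) 0 with hu | hu
    · filter_upwards [self_mem_nhdsWithin] with ε (hε : 0 < ε)
      nlinarith [hv i hi]
    · have hlim : Tendsto (fun ε => ε * u i) (𝓝[>] (0 : ℝ)) (𝓝 0) :=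
        tendsto_nhdsWithin_of_tendsto_nhds ((continuous_mul_const (u i)).tendsto' 0 0 (zero_mul _))
      exact (hlim.eventually_lt_const (huv i hi hu)).mono fun _ => le_of_lt
  obtain ⟨ε, hε, hεs⟩ := (eventually_mem_nhdsWithin.and ((eventually_all_finset s).2 h)).exists
  exact ⟨ε, hε, hεs⟩

section Circulations

variable {V : Type*} [Fintype V] [DecidableEq V] {A : Finset (V × V)} {q : V × V → ℝ}

theorem convex_isCirculation : Convex ℝ {x | IsCirculation A q x} := by
  rintro x ⟨hx_bd, hx_zero, hx_cons⟩ y ⟨hy_bd, hy_zero, hy_cons⟩ s t hs ht hst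
  refine ⟨fun a ha => ⟨?_, ?_⟩, fun a ha => by simp [hx_zero a ha, hy_zero a ha], fun k => ?_⟩
  · have := (hx_bd a ha).1; have := (hy_bd a ha).1
    simp only [Pi.add_apply, Pi.smul_apply, smul_eq_mul]; positivity
  · calc (s • x + t • y) a = s * x a + t * y a := rfl
      _ ≤ s * q a + t * q a := by gcongr <;> [exact (hx_bd a ha).2; exact (hy_bd a ha).2]
      _ = q a := by rw [← add_mul, hst, one_mul]
  · simp only [Pi.add_apply, Pi.smul_apply, smul_eq_mul, sum_add_distrib, ← mul_sum, hx_cons k,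
      hy_cons k]

theorem convex_isMaxCirculation : Convex ℝ {x | IsMaxCirculation A q x} := by
  rintro x ⟨hx_circ, hx_max⟩ y ⟨hy_circ, hy_max⟩ s t hs ht hst
  refine ⟨convex_isCirculation hx_circ hy_circ hs ht hst, fun z hz => ?_⟩
  simp only [Pi.add_apply, Pi.smul_apply, smul_eq_mul, sum_add_distrib, ← mul_sum]
  calc ∑ a ∈ A, z a = s * ∑ a ∈ A, z a + t * ∑ a ∈ A, z a := by rw [← add_mul, hst, one_mul]
    _ ≤ s * ∑ a ∈ A, x a + t * ∑ a ∈ A, y a :=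
      add_le_add (mul_le_mul_of_nonneg_left (hx_max z hz) hs)
        (mul_le_mul_of_nonneg_left (hy_max z hz) ht)

theorem exists_isMaxCirculation_forall_lt {S : Finset (V × V)} (hS : S.Nonempty)
    (hS_strong : ∀ a ∈ S, IsStrongArc A q a) :
    ∃ x, IsMaxCirculation A q x ∧ ∀ a ∈ S, x a < q a := by
  induction hS using Finset.Nonempty.cons_induction with
  | singleton e =>
    obtain ⟨-, x, hx, hxe⟩ := hS_strong e (mem_singleton_self e)
    exact ⟨x, hx, by simpa using hxe⟩
  | cons e S _ _ ih =>
    obtain ⟨-, y, hy, hye⟩ := hS_strong e (mem_cons_self e S)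
    obtain ⟨x, hx, hxS⟩ := ih fun a ha => hS_strong a (mem_cons_of_mem ha)
    refine ⟨(1 / 2 : ℝ) • x + (1 / 2 : ℝ) • y,
      convex_isMaxCirculation hx hy (by norm_num) (by norm_num) (by norm_num), fun a ha => ?_⟩
    have hxa := (hx.1.1 a (hS_strong a ha).1).2
    have hya := (hy.1.1 a (hS_strong a ha).1).2
    simp only [Pi.add_apply, Pi.smul_apply, smul_eq_mul]
    rcases mem_cons.1 ha with rfl | haS
    · linarith
    · linarith [hxS a haS]

theorem IsMaxCirculation.eq_zero_of_residual {x m : V × V → ℝ} (hx : IsMaxCirculation A q x)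
    (hm_nonneg : ∀ a ∈ A, 0 ≤ m a) (hm_zero : ∀ a ∉ A, m a = 0)
    (hm_cons : ∀ k, outflow A m k = inflow A m k) (hm_resid : ∀ a ∈ A, 0 < m a → x a < q a) :
    ∀ a ∈ A, m a = 0 := by
  obtain ⟨hx_circ, hx_max⟩ := hx
  obtain ⟨ε, hε, hε_le⟩ := exists_pos_forall_mul_le A m (fun a => q a - x a)
    (fun a ha => sub_nonneg.2 (hx_circ.1 a ha).2) (fun a ha hma => sub_pos.2 (hm_resid a ha hma))
  have hy : IsCirculation A q (x + ε • m) := by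
    refine ⟨fun a ha => ⟨?_, ?_⟩, fun a ha => by simp [hx_circ.2.1 a ha, hm_zero a ha],
      fun k => ?_⟩
    · have := (hx_circ.1 a ha).1; have := hm_nonneg a ha
      simp only [Pi.add_apply, Pi.smul_apply, smul_eq_mul]; positivity
    · simp only [Pi.add_apply, Pi.smul_apply, smul_eq_mul]; linarith [hε_le a ha]
    · have := hm_cons k
      simp only [outflow, inflow] at this
      simp only [Pi.add_apply, Pi.smul_apply, smul_eq_mul, sum_add_distrib, ← mul_sum,
        hx_circ.2.2 k, this]
  have hm_sum : ∑ a ∈ A, m a ≤ 0 := by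
    have := hx_max _ hy
    simp only [Pi.add_apply, Pi.smul_apply, smul_eq_mul, sum_add_distrib, ← mul_sum] at this
    nlinarith
  exact (sum_eq_zero_iff_of_nonneg hm_nonneg).1 (le_antisymm hm_sum (sum_nonneg hm_nonneg))

end Circulations

theorem strong_subgraph_acyclic_general
    {V : Type*} [Fintype V] [DecidableEq V]
    (A : Finset (V × V)) (q : V × V → ℝ) :
    Acyclic (fun i j => IsStrongArc A q (i, j)) := by
  classical
  intro i hcycle
  obtain ⟨m, hm_nonneg, hm_strong, ⟨a₀, hm_a₀⟩, hm_bal⟩ :=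
    exists_flow_of_transGen A (fun _ _ h => h.1) hcycle
  have hm_supp : ∀ a, m a ≠ 0 → IsStrongArc A q a := fun a ha => hm_strong a ha
  have ha₀ := hm_supp a₀ hm_a₀.ne'
  obtain ⟨x, hx, hx_lt⟩ := exists_isMaxCirculation_forall_lt (S := A.filter (IsStrongArc A q))
    ⟨a₀, mem_filter.2 ⟨ha₀.1, ha₀⟩⟩ fun a ha => (mem_filter.1 ha).2
  have hm_zero := hx.eq_zero_of_residual (fun a _ => hm_nonneg a)
    (fun a ha => by_contra fun hma => ha (hm_supp a hma).1)
    (fun k => add_right_cancel (hm_bal k))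
    (fun a ha hma => hx_lt a (mem_filter.2 ⟨ha, hm_supp a hma.ne'⟩))
  exact hm_a₀.ne' (hm_zero a₀ ha₀.1)

/-- the strong subgraph `A*` is acyclic. -/
theorem strong_subgraph_acyclic
    {V : Type*} [Fintype V] [DecidableEq V]
    (A : Finset (V × V)) (q : V × V → ℝ)
    (hqpos : ∀ a ∈ A, 0 < q a) :
    Acyclic (fun i j => IsStrongArc A q (i, j)) :=
  strong_subgraph_acyclic_general A q
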